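/- Let Ω be an alternating bilinear 2-form on ℂ^n (not assumed nondegenerate on all of ℂ^n) such that for every nonempty subset I ⊆ {1,...,n} the restriction Ω|_{ℂ^n_I} is nondegenerate and the Ω-orientation of ℂ^n_I agrees with its complex orientation. Then for all nonempty I ⊆ {1,...,n}, all s ≥ 0, and all i ∈ {1,...,n}, the restriction of Ω + s·dx_i∧dy_i to ℂ^n_I is nondegenerate. -/

import Mathlib

set_option synthInstance.maxHeartbeats 1000000
set_option maxHeartbeats 1000000

open ExteriorAlgebra

/-- The real-linear functional `dx_i = Re ∘ z_i` on `ℂ^n`. -/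
noncomputable def dxF (n : ℕ) (i : Fin n) : Module.Dual ℝ (Fin n → ℂ) :=
  Complex.reLm.comp ((LinearMap.proj i : (Fin n → ℂ) →ₗ[ℂ] ℂ).restrictScalars ℝ)

/-- The real-linear functional `dy_i = Im ∘ z_i` on `ℂ^n`. -/
noncomputable def dyF (n : ℕ) (i : Fin n) : Module.Dual ℝ (Fin n → ℂ) :=
  Complex.imLm.comp ((LinearMap.proj i : (Fin n → ℂ) →ₗ[ℂ] ℂ).restrictScalars ℝ)

/-- `dx_i` as a degree-1 element of the exterior algebra of the dual of `ℂ^n`. -/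
noncomputable def dxE (n : ℕ) (i : Fin n) :
    ExteriorAlgebra ℝ (Module.Dual ℝ (Fin n → ℂ)) :=
  ExteriorAlgebra.ι ℝ (dxF n i)

/-- `dy_i` as a degree-1 element of the exterior algebra of the dual of `ℂ^n`. -/
noncomputable def dyE (n : ℕ) (i : Fin n) :
    ExteriorAlgebra ℝ (Module.Dual ℝ (Fin n → ℂ)) :=
  ExteriorAlgebra.ι ℝ (dyF n i)

/-- The coordinate area form `dx_i ∧ dy_i`. -/
noncomputable def dxyE (n : ℕ) (i : Fin n) :
    ExteriorAlgebra ℝ (Module.Dual ℝ (Fin n → ℂ)) :=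
  dxE n i * dyE n i

/-- The complex volume form of the coordinate subspace `ℂ^n_I`: the wedge of
`dx_i ∧ dy_i` over `i ∉ I` (in increasing order). -/
noncomputable def volForm (n : ℕ) (I : Finset (Fin n)) :
    ExteriorAlgebra ℝ (Module.Dual ℝ (Fin n → ℂ)) :=
  (((Iᶜ).sort (· ≤ ·)).map fun i => dxyE n i).prod

/-- The projection of `ℂ^n` onto the coordinate subspace `ℂ^n_I` (setting the
coordinates in `I` to zero). -/
noncomputable def coordProj (n : ℕ) (I : Finset (Fin n)) :
    (Fin n → ℂ) →ₗ[ℝ] (Fin n → ℂ) where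
  toFun z := fun i => if i ∈ I then 0 else z i
  map_add' := by intro a b; funext i; by_cases h : i ∈ I <;> simp [h]
  map_smul' := by intro c a; funext i; by_cases h : i ∈ I <;> simp [h]

/-- Pullback of exterior forms on `ℂ^n` along the projection onto `ℂ^n_I`; this computes
the restriction of a form to the coordinate subspace `ℂ^n_I`. -/
noncomputable def pullbackI (n : ℕ) (I : Finset (Fin n)) :
    ExteriorAlgebra ℝ (Module.Dual ℝ (Fin n → ℂ)) →ₐ[ℝ]
      ExteriorAlgebra ℝ (Module.Dual ℝ (Fin n → ℂ)) :=
  ExteriorAlgebra.map ((coordProj n I).dualMap)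

/-- The subspace of genuine (grade-2) alternating 2-forms inside the exterior algebra. -/
noncomputable def grade2 (n : ℕ) :
    Submodule ℝ (ExteriorAlgebra ℝ (Module.Dual ℝ (Fin n → ℂ))) :=
  LinearMap.range (ExteriorAlgebra.ι ℝ (M := Module.Dual ℝ (Fin n → ℂ))) ^ 2

/-!
Let `a` be the restriction of `Ω` to `ℂ^n_I` and `b = s • dx_i ∧ dy_i`. If `i ∈ I`, then `b`
restricts to `0` and the hypothesis applies directly. Otherwise `b` is central with `b ∧ b = 0`,
so `(a + b)^(k+1) = a^(k+1) + (k+1) a^k ∧ b`. Wedging with `dx_i ∧ dy_i` kills the `dx_i, dy_i`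
components of every factor, so `a^k ∧ b` is the top power of the restriction of `Ω` to
`ℂ^n_{I ∪ {i}}` wedged with `b`, i.e. `s c'` times the volume form of `ℂ^n_I`. The top power is
therefore `(c + (k+1) s c')` times that nonzero volume form, with `c, c' > 0`.
-/

theorem Commute.add_pow_succ_of_mul_self_eq_zero {A : Type*} [Semiring A] {a b : A}
    (h : Commute a b) (hb : b * b = 0) (k : ℕ) :
    (a + b) ^ (k + 1) = a ^ (k + 1) + (k + 1) • (a ^ k * b) := by
  induction k with
  | zero => simp
  | succ k ih =>
    have hba : a ^ k * b * a = a ^ (k + 1) * b := by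
      rw [mul_assoc, ← h.eq, ← mul_assoc, ← pow_succ]
    rw [pow_succ, ih, add_mul, mul_add, smul_mul_assoc, mul_add, hba,
      mul_assoc, hb, mul_zero, add_zero, ← pow_succ, succ_nsmul _ (k + 1)]
    abel

namespace ExteriorAlgebra

variable {R M : Type*} [CommRing R] [AddCommGroup M] [Module R M]

theorem ι_mul_ι_eq_neg (x y : M) : ι R x * ι R y = -(ι R y * ι R x) :=
  eq_neg_of_add_eq_zero_left (ι_add_mul_swap x y)

theorem commute_ι_mul_ι (f g : M) (x : ExteriorAlgebra R M) : Commute (ι R f * ι R g) x := by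
  induction x using ExteriorAlgebra.induction with
  | algebraMap r => exact Algebra.commutes r _ |>.symm
  | ι m =>
    show ι R f * ι R g * ι R m = ι R m * (ι R f * ι R g)
    rw [mul_assoc, ι_mul_ι_eq_neg g m, mul_neg, ← mul_assoc, ι_mul_ι_eq_neg f m, neg_mul,
      neg_neg, mul_assoc]
  | mul a b ha hb => exact ha.mul_right hb
  | add a b ha hb => exact ha.add_right hb

theorem ι_mul_ι_mul_self (f g : M) : ι R f * ι R g * (ι R f * ι R g) = 0 := by
  rw [← mul_assoc, (commute_ι_mul_ι f g (ι R f)).eq, ← mul_assoc (ι R f), ι_sq_zero, zero_mul,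
    zero_mul]

theorem mul_ι_mul_ι_eq_map_mul (P : M →ₗ[R] M) {f g : M}
    (hP : ∀ m, ∃ a b : R, m = P m + a • f + b • g) (x : ExteriorAlgebra R M) :
    x * (ι R f * ι R g) = map P x * (ι R f * ι R g) := by
  induction x using ExteriorAlgebra.induction with
  | algebraMap r => rw [AlgHom.commutes]
  | ι m =>
    obtain ⟨a, b, hm⟩ := hP m
    have hf : ι R f * (ι R f * ι R g) = 0 := by rw [← mul_assoc, ι_sq_zero, zero_mul]
    have hg : ι R g * (ι R f * ι R g) = 0 := by
      rw [← (commute_ι_mul_ι f g _).eq, mul_assoc, ι_sq_zero, mul_zero]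
    conv_lhs => rw [hm]
    rw [map_apply_ι, map_add, map_add, map_smul, map_smul, add_mul, add_mul, smul_mul_assoc,
      smul_mul_assoc, hf, hg, smul_zero, smul_zero, add_zero, add_zero]
  | mul a b ha hb =>
    calc a * b * (ι R f * ι R g)
        = a * (ι R f * ι R g) * map P b := by
          rw [mul_assoc, hb, ← (commute_ι_mul_ι f g _).eq, ← mul_assoc]
      _ = map P (a * b) * (ι R f * ι R g) := by
          rw [ha, mul_assoc, (commute_ι_mul_ι f g _).eq, map_mul, mul_assoc]
  | add a b ha hb => rw [add_mul, ha, hb, ← add_mul, ← map_add]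

theorem contractLeft_ι_mul_ι_mul (d : Module.Dual R M) {f g : M} (hf : d f = 0) (hg : d g = 0)
    (x : ExteriorAlgebra R M) :
    CliffordAlgebra.contractLeft d (ι R f * ι R g * x)
      = ι R f * ι R g * CliffordAlgebra.contractLeft d x := by
  rw [mul_assoc, CliffordAlgebra.contractLeft_ι_mul, CliffordAlgebra.contractLeft_ι_mul, hf, hg,
    zero_smul, zero_smul, zero_sub, zero_sub, mul_neg, neg_neg, mul_assoc]

theorem contractLeft_contractLeft_ι_mul_ι_mul (d e : Module.Dual R M) {f g : M} (hdf : d f = 1)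
    (hdg : d g = 0) (heg : e g = 1) {x : ExteriorAlgebra R M}
    (hdx : CliffordAlgebra.contractLeft d x = 0) (hex : CliffordAlgebra.contractLeft e x = 0) :
    CliffordAlgebra.contractLeft e (CliffordAlgebra.contractLeft d (ι R f * ι R g * x)) = x := by
  rw [mul_assoc, CliffordAlgebra.contractLeft_ι_mul, CliffordAlgebra.contractLeft_ι_mul, hdf, hdg,
    hdx, zero_smul, mul_zero, sub_zero, mul_zero, sub_zero, one_smul,
    CliffordAlgebra.contractLeft_ι_mul, heg, hex, mul_zero, sub_zero, one_smul]

variable {κ : Type*} (f g : κ → M)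

theorem contractLeft_prod_ι_mul_ι_eq_zero (d : Module.Dual R M) (l : List κ)
    (hf : ∀ m ∈ l, d (f m) = 0) (hg : ∀ m ∈ l, d (g m) = 0) :
    CliffordAlgebra.contractLeft d ((l.map fun m => ι R (f m) * ι R (g m)).prod) = 0 := by
  induction l with
  | nil => exact CliffordAlgebra.contractLeft_one _ d
  | cons m l ih =>
    rw [List.map_cons, List.prod_cons,
      contractLeft_ι_mul_ι_mul d (hf m List.mem_cons_self) (hg m List.mem_cons_self),
      ih (fun k hk => hf k (List.mem_cons_of_mem m hk))
        (fun k hk => hg k (List.mem_cons_of_mem m hk)), mul_zero]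

/-- Contracting with `d j` and then `e j` strips the factor `ι (f j) * ι (g j)` off the
product; if the product vanished, repeating this would give `1 = 0`. -/
theorem prod_ι_mul_ι_ne_zero [Nontrivial R] (d e : κ → Module.Dual R M)
    (hdf : ∀ j, d j (f j) = 1) (hdg : ∀ j, d j (g j) = 0) (heg : ∀ j, e j (g j) = 1)
    (hoff : ∀ j m, j ≠ m → d j (f m) = 0 ∧ d j (g m) = 0 ∧ e j (f m) = 0 ∧ e j (g m) = 0)
    {l : List κ} (hl : l.Nodup) : (l.map fun m => ι R (f m) * ι R (g m)).prod ≠ 0 := by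
  induction l with
  | nil => exact one_ne_zero
  | cons j l ih =>
    rw [List.nodup_cons] at hl
    have hoff' : ∀ m ∈ l, j ≠ m := fun m hm hjm => hl.1 (hjm ▸ hm)
    intro h
    apply ih hl.2
    rw [List.map_cons, List.prod_cons] at h
    rw [← contractLeft_contractLeft_ι_mul_ι_mul (d j) (e j) (hdf j) (hdg j) (heg j)
      (contractLeft_prod_ι_mul_ι_eq_zero f g _ l (fun m hm => (hoff j m (hoff' m hm)).1)
        (fun m hm => (hoff j m (hoff' m hm)).2.1))
      (contractLeft_prod_ι_mul_ι_eq_zero f g _ l (fun m hm => (hoff j m (hoff' m hm)).2.2.1)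
        (fun m hm => (hoff j m (hoff' m hm)).2.2.2)), h, map_zero, map_zero]

end ExteriorAlgebra

section CoordinateForms

variable {n : ℕ}

@[simp] lemma dxF_apply (i : Fin n) (z : Fin n → ℂ) : dxF n i z = (z i).re := rfl

@[simp] lemma dyF_apply (i : Fin n) (z : Fin n → ℂ) : dyF n i z = (z i).im := rfl

@[simp] lemma coordProj_apply (I : Finset (Fin n)) (z : Fin n → ℂ) (j : Fin n) :
    coordProj n I z j = if j ∈ I then 0 else z j := rfl

lemma pullbackI_dxyE_of_mem {I : Finset (Fin n)} {i : Fin n} (hi : i ∈ I) :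
    pullbackI n I (dxyE n i) = 0 := by
  have hx : (coordProj n I).dualMap (dxF n i) = 0 := by ext z; simp [hi]
  rw [dxyE, dxE, dyE, pullbackI, map_mul, map_apply_ι, hx, map_zero, zero_mul]

lemma pullbackI_dxyE_of_notMem {I : Finset (Fin n)} {i : Fin n} (hi : i ∉ I) :
    pullbackI n I (dxyE n i) = dxyE n i := by
  have hx : (coordProj n I).dualMap (dxF n i) = dxF n i := by ext z; simp [hi]
  have hy : (coordProj n I).dualMap (dyF n i) = dyF n i := by ext z; simp [hi]
  rw [dxyE, dxE, dyE, pullbackI, map_mul, map_apply_ι, map_apply_ι, hx, hy]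

lemma pullbackI_pullbackI (I : Finset (Fin n)) (i : Fin n)
    (x : ExteriorAlgebra ℝ (Module.Dual ℝ (Fin n → ℂ))) :
    pullbackI n {i} (pullbackI n I x) = pullbackI n (insert i I) x := by
  have hproj : coordProj n I ∘ₗ coordProj n {i} = coordProj n (insert i I) := by
    refine LinearMap.ext fun z => funext fun j => ?_
    by_cases hj : j ∈ I <;> by_cases hji : j = i <;> simp [hj, hji]
  rw [pullbackI, pullbackI, pullbackI, ← AlgHom.comp_apply, map_comp_map,
    LinearMap.dualMap_comp_dualMap, hproj]

lemma exists_eq_dualMap_coordProj_add (i : Fin n) (f : Module.Dual ℝ (Fin n → ℂ)) :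
    ∃ a b : ℝ, f = (coordProj n {i}).dualMap f + a • dxF n i + b • dyF n i := by
  refine ⟨f (Pi.single i 1), f (Pi.single i Complex.I), LinearMap.ext fun z => ?_⟩
  have hz : z = coordProj n {i} z + (z i).re • (Pi.single i 1 : Fin n → ℂ)
      + (z i).im • (Pi.single i Complex.I : Fin n → ℂ) := by
    ext j
    by_cases hj : j = i
    · subst hj; simp [Complex.real_smul]
    · simp [hj]
  conv_lhs => rw [hz]
  simp only [map_add, map_smul, LinearMap.add_apply, LinearMap.smul_apply,
    LinearMap.dualMap_apply, dxF_apply, dyF_apply, smul_eq_mul]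
  ring

lemma mul_dxyE_eq_pullbackI_mul (i : Fin n) (x : ExteriorAlgebra ℝ (Module.Dual ℝ (Fin n → ℂ))) :
    x * dxyE n i = pullbackI n {i} x * dxyE n i :=
  mul_ι_mul_ι_eq_map_mul _ (exists_eq_dualMap_coordProj_add i) x

lemma commute_dxyE (i j : Fin n) : Commute (dxyE n i) (dxyE n j) := commute_ι_mul_ι _ _ _

lemma volForm_eq_noncommProd (I : Finset (Fin n)) :
    volForm n I = Iᶜ.noncommProd (dxyE n) (Set.pairwise_of_forall _ _ commute_dxyE) := by
  simp only [volForm, Finset.noncommProd, ← Finset.sort_eq Iᶜ (· ≤ ·), Multiset.map_coe,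
    Multiset.noncommProd_coe]

lemma volForm_insert_mul {I : Finset (Fin n)} {i : Fin n} (hi : i ∉ I) :
    volForm n (insert i I) * dxyE n i = volForm n I := by
  have hcompl : Iᶜ = insert i (insert i I)ᶜ := by
    rw [Finset.compl_insert, Finset.insert_erase (Finset.mem_compl.2 hi)]
  have h := Finset.noncommProd_insert_of_notMem' (insert i I)ᶜ i (dxyE n)
    (Set.pairwise_of_forall _ _ commute_dxyE) (by simp)
  rw [volForm_eq_noncommProd, volForm_eq_noncommProd, ← h]
  exact (Finset.noncommProd_congr (g := dxyE n) hcompl (fun _ _ => rfl) _).symm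

lemma volForm_ne_zero (I : Finset (Fin n)) : volForm n I ≠ 0 :=
  prod_ι_mul_ι_ne_zero (dxF n) (dyF n) (fun j => Module.Dual.eval ℝ _ (Pi.single j 1))
    (fun j => Module.Dual.eval ℝ _ (Pi.single j Complex.I)) (by simp) (by simp) (by simp)
    (fun j m hjm => by simp [Ne.symm hjm]) (Finset.sort_nodup _ _)

end CoordinateForms

/-- Nondegeneracy of a restriction is encoded as nonvanishing of its top exterior power. -/
theorem stmt1_general (n : ℕ) (ω : ExteriorAlgebra ℝ (Module.Dual ℝ (Fin n → ℂ)))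
    (hsympl : ∀ I : Finset (Fin n), I.Nonempty → ∃ c : ℝ, 0 < c ∧
      pullbackI n I ω ^ (n - I.card) = c • volForm n I) :
    ∀ I : Finset (Fin n), I.Nonempty → ∀ (s : ℝ), 0 ≤ s → ∀ i : Fin n,
      pullbackI n I (ω + s • dxyE n i) ^ (n - I.card) ≠ 0 := by
  intro I hI s hs i
  obtain ⟨cI, hcI, hωI⟩ := hsympl I hI
  rw [map_add, map_smul]
  by_cases hi : i ∈ I
  · rw [pullbackI_dxyE_of_mem hi, smul_zero, add_zero, hωI]
    exact smul_ne_zero hcI.ne' (volForm_ne_zero I)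
  obtain ⟨cJ, hcJ, hωJ⟩ := hsympl (insert i I) (Finset.insert_nonempty i I)
  have hk : n - I.card = n - (insert i I).card + 1 := by
    have hJ := Finset.card_insert_of_notMem hi
    have hJn := (insert i I).card_le_univ
    rw [Fintype.card_fin] at hJn
    omega
  have hcomm : Commute (pullbackI n I ω) (s • dxyE n i) :=
    ((commute_ι_mul_ι _ _ _).smul_left s).symm
  have hsq : s • dxyE n i * s • dxyE n i = 0 := by
    rw [smul_mul_smul_comm, dxyE, dxE, dyE, ι_mul_ι_mul_self, smul_zero]
  have hmixed : pullbackI n I ω ^ (n - (insert i I).card) * s • dxyE n i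
      = (s * cJ) • volForm n I := by
    rw [mul_smul_comm, mul_dxyE_eq_pullbackI_mul, map_pow, pullbackI_pullbackI, hωJ,
      smul_mul_assoc, volForm_insert_mul hi, smul_smul]
  rw [hk] at hωI ⊢
  rw [pullbackI_dxyE_of_notMem hi, hcomm.add_pow_succ_of_mul_self_eq_zero hsq, hωI, hmixed,
    ← Nat.cast_smul_eq_nsmul ℝ, smul_smul, ← add_smul]
  exact smul_ne_zero (by positivity) (volForm_ne_zero I)

/-- Corollary 3.3: let `Ω` be an alternating bilinear 2-form on `ℂ^n`
(not assumed nondegenerate on all of `ℂ^n`) such that for every nonempty `I ⊆ {1,…,n}`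
the restriction `Ω|_{ℂ^n_I}` is nondegenerate with the `Ω`-orientation equal to the
complex orientation (encoded: the top power of the restriction is a positive multiple of
the complex volume form of `ℂ^n_I`). Then for all nonempty `I`, all `s ≥ 0` and all `i`,
the restriction of `Ω + s·dx_i∧dy_i` to `ℂ^n_I` is nondegenerate. -/
theorem stmt1 (n : ℕ) (ω : ExteriorAlgebra ℝ (Module.Dual ℝ (Fin n → ℂ)))
    (hgrade : ω ∈ grade2 n)
    (hsympl : ∀ I : Finset (Fin n), I.Nonempty → ∃ c : ℝ, 0 < c ∧
      pullbackI n I ω ^ (n - I.card) = c • volForm n I) :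
    ∀ I : Finset (Fin n), I.Nonempty → ∀ (s : ℝ), 0 ≤ s → ∀ i : Fin n,
      pullbackI n I (ω + s • dxyE n i) ^ (n - I.card) ≠ 0 :=
  stmt1_general n ω hsympl
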